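/- arXiv:1112.4667 — 2 statements merged into one kernel-verified Lean document; each statement's English description precedes it below -/
import Mathlib

section
/- There exists an approximating function ψ: ℕ → (0,∞) (not monotonic) such that ∑_{r=1}^∞ ψ(r) = ∞ but the 2-dimensional Lebesgue measure of W₀(2, 1; ψ) is zero. In particular, the divergence part of the Khintchine–Groshev theorem for W₀(m, n; ψ) fails when m = 2, n = 1 without monotonicity assumptions. -/
open MeasureTheory Filter Set

noncomputable section

/-- Supremum norm of an integer vector, as a natural number. -/
def qnorm {m : ℕ} (q : Fin m → ℤ) : ℕ :=
  Finset.univ.sup fun j => (q j).natAbs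

/-- An approximating function: positive and tending to `0` at infinity. -/
def IsApproxFun (ψ : ℕ → ℝ) : Prop :=
  (∀ r, 0 < ψ r) ∧ Tendsto ψ atTop (nhds 0)

/-- The set `W₀(m, n; ψ)` of points `X` in the unit cube `[0,1]^{mn}` (viewed as
`m × n` matrices) such that `max_{1 ≤ i ≤ n} |(qX)_i| < ψ(|q|)` for infinitely many
nonzero integer vectors `q ∈ ℤ^m`. -/
def W0 (m n : ℕ) (ψ : ℕ → ℝ) : Set (Fin m → Fin n → ℝ) :=
  {X | (∀ j i, X j i ∈ Icc (0:ℝ) 1) ∧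
    {q : Fin m → ℤ | q ≠ 0 ∧ ∀ i, |∑ j, (q j : ℝ) * X j i| < ψ (qnorm q)}.Infinite}

/-- A dimension function: positive, increasing and continuous on `(0,∞)`,
tending to `0` at `0`. -/
def IsDimFun (f : ℝ → ℝ) : Prop :=
  (∀ r, 0 < r → 0 < f r) ∧ MonotoneOn f (Ioi 0) ∧ ContinuousOn f (Ioi 0) ∧
    Tendsto f (nhdsWithin 0 (Ioi 0)) (nhds 0)

/-- The Hausdorff measure associated with the gauge (dimension function) `f`. -/
def hausdorffF (f : ℝ → ℝ) (X : Type*) [EMetricSpace X] [MeasurableSpace X]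
    [BorelSpace X] : Measure X :=
  Measure.mkMetric fun d => ENNReal.ofReal (f d.toReal)


lemma DS_exM (k n : ℕ) : ∃ M : ℕ, n + 2 ≤ M ∧ (2:ℝ)^k ≤ ∑ i ∈ Finset.range M, (1:ℝ)/(i+1) := by
  have h := Real.tendsto_sum_range_one_div_nat_succ_atTop
  have h1 := h.eventually_ge_atTop ((2:ℝ)^k)
  have h2 : ∀ᶠ M in atTop, n + 2 ≤ M := eventually_ge_atTop _
  exact (h1.and h2).exists.imp fun M hM => ⟨hM.2, hM.1⟩

def DSM (k n : ℕ) : ℕ := (DS_exM k n).choose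

def DSN : ℕ → ℕ
  | 0 => 1
  | k+1 => Nat.factorial (DSM k (DSN k))

lemma DSM_ge (k : ℕ) : DSN k + 2 ≤ DSM k (DSN k) := (DS_exM k (DSN k)).choose_spec.1
lemma DSM_H (k : ℕ) : (2:ℝ)^k ≤ ∑ i ∈ Finset.range (DSM k (DSN k)), (1:ℝ)/(i+1) :=
  (DS_exM k (DSN k)).choose_spec.2

lemma DSN_pos (k : ℕ) : 1 ≤ DSN k := by
  cases k with
  | zero => exact le_refl 1
  | succ k => exact Nat.factorial_pos _

lemma DSN_lt (k : ℕ) : DSN k < DSN (k+1) := by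
  have h1 := DSM_ge k
  have h2 := Nat.self_le_factorial (DSM k (DSN k))
  show DSN k < Nat.factorial (DSM k (DSN k))
  omega

lemma DSN_mono : StrictMono DSN := strictMono_nat_of_lt_succ DSN_lt

def DSblk (r : ℕ) : Prop := ∃ k, (DSN k < r ∧ r ≤ DSN (k+1)) ∧ r ∣ DSN (k+1)

lemma DSblk_unique {r k k' : ℕ} (h : DSN k < r ∧ r ≤ DSN (k+1))
    (h' : DSN k' < r ∧ r ≤ DSN (k'+1)) : k = k' := by
  by_contra hne
  rcases Nat.lt_or_ge k k' with hlt | hge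
  · have : DSN (k+1) ≤ DSN k' := DSN_mono.le_iff_le.2 hlt
    omega
  · have hlt : k' < k := by omega
    have : DSN (k'+1) ≤ DSN k := DSN_mono.le_iff_le.2 hlt
    omega

open Classical in
def DSpsi (r : ℕ) : ℝ :=
  if h : DSblk r then (1/2)^(h.choose) * r / (DSN (h.choose + 1)) else (1/2)^r

lemma DSpsi_eq {r k : ℕ} (h1 : DSN k < r) (h2 : r ≤ DSN (k+1)) (h3 : r ∣ DSN (k+1)) :
    DSpsi r = (1/2)^k * r / DSN (k+1) := by
  have hb : DSblk r := ⟨k, ⟨h1, h2⟩, h3⟩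
  have hk : hb.choose = k := DSblk_unique hb.choose_spec.1 ⟨h1, h2⟩
  rw [DSpsi, dif_pos hb, hk]

lemma DSpsi_pos (r : ℕ) : 0 < DSpsi r := by
  rw [DSpsi]
  split
  · rename_i h
    have h1 := h.choose_spec.1.1
    have hN := DSN_pos (h.choose + 1)
    have hr : 0 < r := lt_of_le_of_lt (Nat.zero_le _) h1
    positivity
  · positivity

lemma DSpsi_le {r K : ℕ} (hr : DSN K < r) : DSpsi r ≤ (1/2)^K := by
  rw [DSpsi]
  split
  · rename_i h
    obtain ⟨⟨hk1, hk2⟩, -⟩ := h.choose_spec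
    set k := h.choose
    have hkK : K ≤ k := by
      by_contra hc
      have : DSN (k+1) ≤ DSN K := DSN_mono.le_iff_le.2 (by omega)
      omega
    have hNpos : (0:ℝ) < DSN (k+1) := by exact_mod_cast DSN_pos (k+1)
    have h1 : (1/2:ℝ)^k * r / DSN (k+1) ≤ (1/2)^k := by
      rw [div_le_iff₀ hNpos]
      have : (r:ℝ) ≤ DSN (k+1) := by exact_mod_cast hk2
      nlinarith [pow_pos (by norm_num : (0:ℝ) < 1/2) k]
    refine h1.trans (pow_le_pow_of_le_one (by norm_num) (by norm_num) hkK)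
  · have hK : K ≤ r := le_trans (DSN_mono.le_apply) hr.le
    exact pow_le_pow_of_le_one (by norm_num) (by norm_num) hK

lemma DSpsi_tendsto : Tendsto DSpsi atTop (nhds 0) := by
  rw [Metric.tendsto_atTop]
  intro ε hε
  obtain ⟨K, hK⟩ := exists_pow_lt_of_lt_one hε (by norm_num : (1/2:ℝ) < 1)
  refine ⟨DSN K + 1, fun r hr => ?_⟩
  have h1 : DSpsi r ≤ (1/2)^K := DSpsi_le (by omega)
  have h2 : 0 < DSpsi r := DSpsi_pos r
  rw [Real.dist_eq]
  rw [abs_sub_comm, abs_of_nonpos (by linarith)]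
  linarith
-- block finsets for non-summability
def DST (k : ℕ) : Finset ℕ :=
  (Finset.Icc 1 (DSM k (DSN k))).image (fun e => DSN (k+1) / e - 1)

lemma DST_mem {k r : ℕ} (hr : r ∈ DST k) :
    DSN k < r + 1 ∧ r + 1 ≤ DSN (k+1) ∧ (r+1) ∣ DSN (k+1) := by
  rw [DST, Finset.mem_image] at hr
  obtain ⟨e, he, rfl⟩ := hr
  rw [Finset.mem_Icc] at he
  set M := DSM k (DSN k) with hM
  have hMge := DSM_ge k
  have hN : DSN (k+1) = Nat.factorial M := rfl
  have hdvd : e ∣ DSN (k+1) := by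
    rw [hN]; exact Nat.dvd_factorial (by omega) (by omega)
  have hepos : 0 < e := by omega
  have hde : DSN (k+1) / e * e = DSN (k+1) := Nat.div_mul_cancel hdvd
  have hge1 : 1 ≤ DSN (k+1) / e := by
    rw [Nat.le_div_iff_mul_le hepos]
    have : e ≤ M := he.2
    have : M ≤ Nat.factorial M := Nat.self_le_factorial M
    omega
  have hs : DSN (k+1) / e - 1 + 1 = DSN (k+1) / e := by omega
  rw [hs]
  refine ⟨?_, ?_, Nat.div_dvd_of_dvd hdvd⟩
  · -- DSN k < DSN (k+1) / e  since  /e ≥ /M = (M-1)! > DSN k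
    have h1 : DSN (k+1) / M ≤ DSN (k+1) / e := Nat.div_le_div_left he.2 hepos
    have h2 : DSN (k+1) / M = Nat.factorial (M - 1) := by
      obtain ⟨m, hm⟩ : ∃ m, M = m + 1 := ⟨M - 1, by omega⟩
      rw [hN, hm, Nat.factorial_succ, Nat.mul_div_cancel_left _ (by omega)]
      simp
    have h3 : M - 1 ≤ Nat.factorial (M - 1) := Nat.self_le_factorial _
    omega
  · exact Nat.div_le_self _ _

lemma DST_sum (k : ℕ) : (1:ℝ) ≤ ∑ r ∈ DST k, DSpsi (r+1) := by
  set M := DSM k (DSN k) with hM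
  set N := DSN (k+1) with hN
  have hMge := DSM_ge k
  have hNfac : N = Nat.factorial M := rfl
  have hNpos : 0 < N := DSN_pos (k+1)
  have hinj : Set.InjOn (fun e => N / e - 1) (Finset.Icc 1 M) := by
    intro e he e' he' hEq
    simp only [Finset.coe_Icc, Set.mem_Icc] at he he'
    have hd : e ∣ N := by rw [hNfac]; exact Nat.dvd_factorial (by omega) he.2
    have hd' : e' ∣ N := by rw [hNfac]; exact Nat.dvd_factorial (by omega) he'.2
    have h1 : 1 ≤ N / e := Nat.one_le_div_iff (by omega) |>.2 (Nat.le_of_dvd hNpos hd)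
    have h1' : 1 ≤ N / e' := Nat.one_le_div_iff (by omega) |>.2 (Nat.le_of_dvd hNpos hd')
    have hEq2 : N / e = N / e' := by dsimp at hEq; omega
    have := Nat.div_div_self hd (by omega)
    have := Nat.div_div_self hd' (by omega)
    rw [hEq2] at *
    omega
  rw [DST, Finset.sum_image (fun e he e' he' h => hinj he he' h)]
  have hterm : ∀ e ∈ Finset.Icc 1 M, DSpsi (N / e - 1 + 1) = (1/2)^k * (1/(e:ℝ)) := by
    intro e he
    rw [Finset.mem_Icc] at he
    have hd : e ∣ N := by rw [hNfac]; exact Nat.dvd_factorial (by omega) he.2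
    have h1 : 1 ≤ N / e := Nat.one_le_div_iff (by omega) |>.2 (Nat.le_of_dvd hNpos hd)
    have hs : N / e - 1 + 1 = N / e := by omega
    rw [hs]
    have hblk : DSN k < N / e ∧ N / e ≤ N ∧ (N / e) ∣ N := by
      have : (N/e - 1) ∈ DST k := by
        rw [DST, Finset.mem_image]
        exact ⟨e, Finset.mem_Icc.2 he, rfl⟩
      have h2 := DST_mem this
      rw [hs] at h2; exact h2
    rw [DSpsi_eq hblk.1 hblk.2.1 hblk.2.2]
    have hcast : ((N / e : ℕ) : ℝ) = (N : ℝ) / e := by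
      rw [Nat.cast_div hd]
      exact_mod_cast (by omega : e ≠ 0)
    rw [hcast]
    have hNe : (N:ℝ) ≠ 0 := by exact_mod_cast hNpos.ne'
    have hee : (e:ℝ) ≠ 0 := by exact_mod_cast (by omega : e ≠ 0)
    rw [← hN]
    field_simp
  rw [Finset.sum_congr rfl hterm, ← Finset.mul_sum]
  have hsum : ∑ e ∈ Finset.Icc 1 M, (1/(e:ℝ)) = ∑ i ∈ Finset.range M, (1:ℝ)/(i+1) := by
    rw [← Finset.Ico_add_one_right_eq_Icc, Finset.sum_Ico_eq_sum_range]
    simp [add_comm]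
  rw [hsum]
  have hH := DSM_H k
  have : (1:ℝ) = (1/2)^k * (2:ℝ)^k := by
    rw [div_pow, one_pow, one_div]
    exact (inv_mul_cancel₀ (by positivity : (0:ℝ) < (2:ℝ)^k).ne').symm
  calc (1:ℝ) = (1/2)^k * (2:ℝ)^k := this
  _ ≤ (1/2)^k * ∑ i ∈ Finset.range M, (1:ℝ)/(i+1) :=
      mul_le_mul_of_nonneg_left hH (by positivity)

lemma DST_disj : ∀ k k', k ≠ k' → Disjoint (DST k) (DST k') := by
  intro k k' hne
  rw [Finset.disjoint_left]
  intro r hr hr'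
  have h1 := DST_mem hr
  have h2 := DST_mem hr'
  exact hne (DSblk_unique ⟨h1.1, h1.2.1⟩ ⟨h2.1, h2.2.1⟩)

lemma DSpsi_not_summable : ¬ Summable (fun r : ℕ => DSpsi (r+1)) := by
  intro hs
  have hpos : ∀ r : ℕ, 0 ≤ DSpsi (r+1) := fun r => (DSpsi_pos _).le
  obtain ⟨K, hK⟩ := exists_nat_gt (∑' r, DSpsi (r+1))
  have hle : ∑ r ∈ (Finset.range K).biUnion DST, DSpsi (r+1) ≤ ∑' r, DSpsi (r+1) :=
    Summable.sum_le_tsum _ (fun r _ => hpos r) hs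
  rw [Finset.sum_biUnion] at hle
  · have hlow : (K:ℝ) ≤ ∑ k ∈ Finset.range K, ∑ r ∈ DST k, DSpsi (r+1) := by
      calc (K:ℝ) = ∑ _k ∈ Finset.range K, (1:ℝ) := by simp
      _ ≤ _ := Finset.sum_le_sum (fun k _ => DST_sum k)
    linarith
  · intro k _ k' _ hne
    exact DST_disj k k' hne
-- measure-theoretic part
lemma DSslice (b d c : ℝ) (hb : b ≠ 0) :
    volume {y : ℝ | |d + b * y| < c} ≤ ENNReal.ofReal (2*c/|b|) := by
  rcases le_or_gt c 0 with hc | hc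
  · have he : {y : ℝ | |d + b * y| < c} = ∅ := by
      ext y; simp only [mem_setOf_eq, mem_empty_iff_false, iff_false, not_lt]
      exact hc.trans (abs_nonneg _)
    simp [he]
  · set u := (-c - d)/b with hu
    set v := (c - d)/b with hv
    have hsub : {y : ℝ | |d + b * y| < c} ⊆ Set.Ioo (min u v) (max u v) := by
      intro y hy
      rw [mem_setOf_eq, abs_lt] at hy
      rcases lt_or_gt_of_ne hb with hbneg | hbpos
      · constructor
        · have h1 : v < y := by
            rw [hv, div_lt_iff_of_neg hbneg]; nlinarith [hy.2]
          exact lt_of_le_of_lt (min_le_right u v) h1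
        · have h2 : y < u := by
            rw [hu, lt_div_iff_of_neg hbneg]; nlinarith [hy.1]
          exact lt_of_lt_of_le h2 (le_max_left u v)
      · constructor
        · have h1 : u < y := by
            rw [hu, div_lt_iff₀ hbpos]; nlinarith [hy.1]
          exact lt_of_le_of_lt (min_le_left u v) h1
        · have h2 : y < v := by
            rw [hv, lt_div_iff₀ hbpos]; nlinarith [hy.2]
          exact lt_of_lt_of_le h2 (le_max_right u v)
    calc volume {y : ℝ | |d + b * y| < c} ≤ volume (Set.Ioo (min u v) (max u v)) :=
          measure_mono hsub
    _ = ENNReal.ofReal (max u v - min u v) := Real.volume_Ioo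
    _ = ENNReal.ofReal (2*c/|b|) := by
        rw [max_sub_min_eq_abs]
        congr 1
        rw [abs_sub_comm]
        have : u - v = (-(2*c))/b := by rw [hu, hv]; ring
        rw [this, abs_div, abs_neg, abs_of_pos (by linarith : (0:ℝ) < 2*c)]

def DSxy (a b : ℤ) (c : ℝ) : Set (ℝ × ℝ) :=
  {p : ℝ × ℝ | (p.1 ∈ Icc (0:ℝ) 1 ∧ p.2 ∈ Icc (0:ℝ) 1) ∧ |a * p.1 + b * p.2| < c}

lemma DSxy_meas (a b : ℤ) (c : ℝ) : MeasurableSet (DSxy a b c) := by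
  have : DSxy a b c =
      ((fun p : ℝ × ℝ => p.1) ⁻¹' Icc (0:ℝ) 1) ∩ ((fun p : ℝ × ℝ => p.2) ⁻¹' Icc (0:ℝ) 1) ∩
        {p : ℝ × ℝ | |a * p.1 + b * p.2| < c} := by
    ext p; simp [DSxy, and_assoc]
  rw [this]
  refine (((measurable_fst measurableSet_Icc)).inter
    ((measurable_snd measurableSet_Icc))).inter ?_
  exact measurableSet_lt (Measurable.abs (by fun_prop)) measurable_const

lemma DSxy_vol (a b : ℤ) (c : ℝ) (hc : 0 ≤ c) (N : ℕ) (hN : 1 ≤ N)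
    (hmax : max a.natAbs b.natAbs = N) :
    volume (DSxy a b c) ≤ ENNReal.ofReal (2*c/N) := by
  have hmeas := DSxy_meas a b c
  rcases max_choice a.natAbs b.natAbs with h | h
  · -- a.natAbs = N : slice in x for fixed y
    rw [hmax] at h
    have hane : (a:ℝ) ≠ 0 := by
      simp only [ne_eq, Int.cast_eq_zero]
      intro h0; rw [h0] at h; simp at h; omega
    have habs : |(a:ℝ)| = N := by
      rw [h, Nat.cast_natAbs (α := ℝ), Int.cast_abs]
    rw [Measure.volume_eq_prod, Measure.prod_apply_symm hmeas]
    have hb : ∀ y : ℝ, volume ((fun x => (x, y)) ⁻¹' DSxy a b c) ≤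
        Set.indicator (Icc (0:ℝ) 1) (fun _ => ENNReal.ofReal (2*c/N)) y := by
      intro y
      by_cases hy : y ∈ Icc (0:ℝ) 1
      · rw [Set.indicator_of_mem hy]
        have hsub : ((fun x => (x, y)) ⁻¹' DSxy a b c) ⊆
            {x : ℝ | |(b:ℝ) * y + a * x| < c} := by
          intro x hx
          simp only [DSxy, mem_preimage, mem_setOf_eq] at hx ⊢
          rw [add_comm] at hx
          exact hx.2
        refine le_trans (measure_mono hsub) ?_
        have := DSslice (a:ℝ) ((b:ℝ)*y) c hane
        rwa [habs] at this
      · rw [Set.indicator_of_notMem hy]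
        have : ((fun x => (x, y)) ⁻¹' DSxy a b c) = ∅ := by
          ext x
          simp only [DSxy, mem_preimage, mem_setOf_eq, mem_empty_iff_false, iff_false]
          intro hx; exact hy hx.1.2
        simp [this]
    calc ∫⁻ y, volume ((fun x => (x, y)) ⁻¹' DSxy a b c) ≤
        ∫⁻ y, Set.indicator (Icc (0:ℝ) 1) (fun _ => ENNReal.ofReal (2*c/N)) y :=
          lintegral_mono hb
    _ = ENNReal.ofReal (2*c/N) * volume (Icc (0:ℝ) 1) :=
          lintegral_indicator_const measurableSet_Icc _
    _ = ENNReal.ofReal (2*c/N) := by rw [Real.volume_Icc]; norm_num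
  · -- b.natAbs = N : slice in y for fixed x
    rw [hmax] at h
    have hbne : (b:ℝ) ≠ 0 := by
      simp only [ne_eq, Int.cast_eq_zero]
      intro h0; rw [h0] at h; simp at h; omega
    have habs : |(b:ℝ)| = N := by
      rw [h, Nat.cast_natAbs (α := ℝ), Int.cast_abs]
    rw [Measure.volume_eq_prod, Measure.prod_apply hmeas]
    have hb : ∀ x : ℝ, volume (Prod.mk x ⁻¹' DSxy a b c) ≤
        Set.indicator (Icc (0:ℝ) 1) (fun _ => ENNReal.ofReal (2*c/N)) x := by
      intro x
      by_cases hx : x ∈ Icc (0:ℝ) 1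
      · rw [Set.indicator_of_mem hx]
        have hsub : (Prod.mk x ⁻¹' DSxy a b c) ⊆
            {y : ℝ | |(a:ℝ) * x + b * y| < c} := by
          intro y hy
          simp only [DSxy, mem_preimage, mem_setOf_eq] at hy ⊢
          exact hy.2
        refine le_trans (measure_mono hsub) ?_
        have := DSslice (b:ℝ) ((a:ℝ)*x) c hbne
        rwa [habs] at this
      · rw [Set.indicator_of_notMem hx]
        have : (Prod.mk x ⁻¹' DSxy a b c) = ∅ := by
          ext y
          simp only [DSxy, mem_preimage, mem_setOf_eq, mem_empty_iff_false, iff_false]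
          intro hy; exact hx hy.1.1
        simp [this]
    calc ∫⁻ x, volume (Prod.mk x ⁻¹' DSxy a b c) ≤
        ∫⁻ x, Set.indicator (Icc (0:ℝ) 1) (fun _ => ENNReal.ofReal (2*c/N)) x :=
          lintegral_mono hb
    _ = ENNReal.ofReal (2*c/N) * volume (Icc (0:ℝ) 1) :=
          lintegral_indicator_const measurableSet_Icc _
    _ = ENNReal.ofReal (2*c/N) := by rw [Real.volume_Icc]; norm_num
-- strips in the pi space
def DSphi (X : Fin 2 → Fin 1 → ℝ) : ℝ × ℝ := (X 0 0, X 1 0)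

lemma DSphi_mp : MeasurePreserving DSphi volume volume := by
  have h1 : MeasurePreserving
      (fun (X : Fin 2 → Fin 1 → ℝ) (i : Fin 2) => MeasurableEquiv.funUnique (Fin 1) ℝ (X i))
      volume volume :=
    volume_preserving_pi (fun _ => volume_preserving_funUnique (Fin 1) ℝ)
  have h2 := (volume_preserving_finTwoArrow ℝ).comp h1
  have heq : DSphi = (MeasurableEquiv.finTwoArrow : (Fin 2 → ℝ) ≃ᵐ ℝ × ℝ) ∘
      (fun (X : Fin 2 → Fin 1 → ℝ) (i : Fin 2) => MeasurableEquiv.funUnique (Fin 1) ℝ (X i)) := by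
    funext X; rfl
  rw [heq]; exact h2

def DSstrip (a b : ℤ) (c : ℝ) : Set (Fin 2 → Fin 1 → ℝ) := DSphi ⁻¹' DSxy a b c

lemma DSstrip_vol (a b : ℤ) (c : ℝ) (hc : 0 ≤ c) (N : ℕ) (hN : 1 ≤ N)
    (hmax : max a.natAbs b.natAbs = N) :
    volume (DSstrip a b c) ≤ ENNReal.ofReal (2*c/N) := by
  rw [DSstrip, DSphi_mp.measure_preimage (DSxy_meas a b c).nullMeasurableSet]
  exact DSxy_vol a b c hc N hN hmax

def DSS (N : ℕ) : Finset (ℤ × ℤ) :=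
  (Finset.Icc (-(N:ℤ)) N ×ˢ Finset.Icc (-(N:ℤ)) N) \
  (Finset.Icc (-(N:ℤ)+1) ((N:ℤ)-1) ×ˢ Finset.Icc (-(N:ℤ)+1) ((N:ℤ)-1))

lemma DSmax_iff {x y n : ℕ} : max x y = n ↔ x ≤ n ∧ y ≤ n ∧ (x = n ∨ y = n) := by
  rcases le_total x y with h | h
  · rw [max_eq_right h]; omega
  · rw [max_eq_left h]; omega

lemma DSS_mem {N : ℕ} (hN : 1 ≤ N) (p : ℤ × ℤ) :
    p ∈ DSS N ↔ max p.1.natAbs p.2.natAbs = N := by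
  simp only [DSS, Finset.mem_sdiff, Finset.mem_product, Finset.mem_Icc, DSmax_iff]
  omega

lemma DSS_card {N : ℕ} (hN : 1 ≤ N) : (DSS N).card = 8 * N := by
  have hsub : (Finset.Icc (-(N:ℤ)+1) ((N:ℤ)-1) ×ˢ Finset.Icc (-(N:ℤ)+1) ((N:ℤ)-1)) ⊆
      (Finset.Icc (-(N:ℤ)) N ×ˢ Finset.Icc (-(N:ℤ)) N) :=
    Finset.product_subset_product (Finset.Icc_subset_Icc (by omega) (by omega))
      (Finset.Icc_subset_Icc (by omega) (by omega))
  rw [DSS, Finset.card_sdiff_of_subset hsub, Finset.card_product, Finset.card_product,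
    Int.card_Icc, Int.card_Icc]
  have h1 : ((N:ℤ) + 1 - (-(N:ℤ))).toNat = 2*N+1 := by omega
  have h2 : (((N:ℤ)-1) + 1 - (-(N:ℤ)+1)).toNat = 2*N-1 := by omega
  rw [h1, h2]
  obtain ⟨n, rfl⟩ : ∃ n, N = n + 1 := ⟨N - 1, by omega⟩
  have e : 2*(n+1)-1 = 2*n+1 := by omega
  rw [e]
  apply Nat.sub_eq_of_eq_add
  ring

def DSG (k : ℕ) : Set (Fin 2 → Fin 1 → ℝ) :=
  ⋃ p ∈ DSS (DSN (k+1)), DSstrip p.1 p.2 ((1/2)^k)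

def DSF (r : ℕ) : Set (Fin 2 → Fin 1 → ℝ) :=
  if r = 0 then ∅ else ⋃ p ∈ DSS r, DSstrip p.1 p.2 ((1/2)^r)

lemma DSunion_vol (N : ℕ) (hN : 1 ≤ N) (c : ℝ) (hc : 0 ≤ c) :
    volume (⋃ p ∈ DSS N, DSstrip p.1 p.2 c) ≤ ENNReal.ofReal (16 * c) := by
  refine le_trans (measure_biUnion_finset_le _ _) ?_
  have hb : ∀ p ∈ DSS N, volume (DSstrip p.1 p.2 c) ≤ ENNReal.ofReal (2*c/N) :=
    fun p hp => DSstrip_vol p.1 p.2 c hc N hN ((DSS_mem hN p).1 hp)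
  refine le_trans (Finset.sum_le_card_nsmul _ _ _ hb) ?_
  rw [DSS_card hN, nsmul_eq_mul]
  have hN' : (N:ℝ) ≠ 0 := by exact_mod_cast (by omega : N ≠ 0)
  calc ((8*N : ℕ) : ENNReal) * ENNReal.ofReal (2*c/N)
      = ENNReal.ofReal ((8*N : ℕ)) * ENNReal.ofReal (2*c/N) := by
        rw [ENNReal.ofReal_natCast]
    _ = ENNReal.ofReal (((8*N : ℕ) : ℝ) * (2*c/N)) := (ENNReal.ofReal_mul (by positivity)).symm
    _ = ENNReal.ofReal (16*c) := by
        congr 1; push_cast; field_simp; ring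
    _ ≤ ENNReal.ofReal (16*c) := le_refl _

lemma DSG_vol (k : ℕ) : volume (DSG k) ≤ ENNReal.ofReal (16 * (1/2)^k) :=
  DSunion_vol _ (DSN_pos _) _ (by positivity)

lemma DSF_vol (r : ℕ) : volume (DSF r) ≤ ENNReal.ofReal (16 * (1/2)^r) := by
  rw [DSF]
  split
  · simp
  · rename_i h
    exact DSunion_vol _ (by omega) _ (by positivity)

lemma DSsum_ne_top : (∑' k : ℕ, ENNReal.ofReal (16 * (1/2)^k)) ≠ ⊤ := by
  have hsummable : Summable (fun k : ℕ => 16 * (1/2:ℝ)^k) := summable_geometric_two.mul_left 16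
  rw [← ENNReal.ofReal_tsum_of_nonneg (fun n => by positivity) hsummable]
  exact ENNReal.ofReal_ne_top

lemma DSG_limsup : volume (limsup DSG atTop) = 0 :=
  measure_limsup_atTop_eq_zero
    (ne_top_of_le_ne_top DSsum_ne_top (ENNReal.tsum_le_tsum DSG_vol))

lemma DSF_limsup : volume (limsup DSF atTop) = 0 :=
  measure_limsup_atTop_eq_zero
    (ne_top_of_le_ne_top DSsum_ne_top (ENNReal.tsum_le_tsum DSF_vol))
lemma DSqnorm_two (q : Fin 2 → ℤ) : qnorm q = max (q 0).natAbs (q 1).natAbs := by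
  have huniv : (Finset.univ : Finset (Fin 2)) = {0, 1} := by decide
  rw [qnorm, huniv, Finset.sup_insert, Finset.sup_singleton]

lemma DSW0_subset : W0 2 1 DSpsi ⊆ (limsup DSF atTop) ∪ (limsup DSG atTop) := by
  intro X hX
  obtain ⟨hcube, hinf⟩ := hX
  by_contra hno
  rw [Set.mem_union, not_or] at hno
  obtain ⟨hFmem, hGmem⟩ := hno
  rw [mem_limsup_iff_frequently_mem, Filter.not_frequently] at hFmem hGmem
  obtain ⟨R, hR⟩ := eventually_atTop.1 hFmem
  obtain ⟨K, hK⟩ := eventually_atTop.1 hGmem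
  set B := max R (DSN K) with hB
  have hfin : {q : Fin 2 → ℤ | qnorm q ≤ B}.Finite := by
    refine Set.Finite.subset (Set.Finite.pi (fun _ : Fin 2 => Set.finite_Icc (-(B:ℤ)) B)) ?_
    intro q hq
    rw [Set.mem_pi]
    intro j _
    have h1 : (q j).natAbs ≤ qnorm q := Finset.le_sup (f := fun j => (q j).natAbs) (Finset.mem_univ j)
    have h2 : (q j).natAbs ≤ B := le_trans h1 hq
    rw [Set.mem_Icc]
    omega
  obtain ⟨q, hq, hqB⟩ : ∃ q ∈ {q : Fin 2 → ℤ | q ≠ 0 ∧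
      ∀ i, |∑ j, (q j : ℝ) * X j i| < DSpsi (qnorm q)}, ¬ (qnorm q ≤ B) := by
    by_contra hall
    push_neg at hall
    exact hinf (hfin.subset hall)
  obtain ⟨hq0, hqlt⟩ := hq
  have hrB : B < qnorm q := Nat.not_le.mp hqB
  set r := qnorm q with hr
  have hqnorm : r = max (q 0).natAbs (q 1).natAbs := DSqnorm_two q
  have h0 : |(q 0 : ℝ) * X 0 0 + (q 1 : ℝ) * X 1 0| < DSpsi r := by
    have := hqlt 0
    rwa [Fin.sum_univ_two] at this
  have hXmem : X 0 0 ∈ Icc (0:ℝ) 1 ∧ X 1 0 ∈ Icc (0:ℝ) 1 := ⟨hcube 0 0, hcube 1 0⟩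
  have hr1 : 1 ≤ r := by omega
  by_cases hb : DSblk r
  · obtain ⟨k, ⟨hk1, hk2⟩, hk3⟩ := hb
    have hpsi : DSpsi r = (1/2)^k * r / DSN (k+1) := DSpsi_eq hk1 hk2 hk3
    have hBK : DSN K ≤ B := le_max_right R (DSN K)
    have hkK : K ≤ k := by
      by_contra hc
      have : DSN (k+1) ≤ DSN K := DSN_mono.le_iff_le.2 (by omega)
      omega
    set t : ℕ := DSN (k+1) / r with ht
    have htr : t * r = DSN (k+1) := Nat.div_mul_cancel hk3
    have htpos : 1 ≤ t := by
      rcases Nat.eq_zero_or_pos t with h0' | h0'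
      · rw [h0', zero_mul] at htr
        have := DSN_pos (k+1); omega
      · omega
    have hmem : ((t:ℤ) * q 0, (t:ℤ) * q 1) ∈ DSS (DSN (k+1)) := by
      rw [DSS_mem (DSN_pos (k+1))]
      simp only [Int.natAbs_mul, Int.natAbs_natCast]
      have hmm : max (t * (q 0).natAbs) (t * (q 1).natAbs)
          = t * max (q 0).natAbs (q 1).natAbs := by
        rcases le_total (q 0).natAbs (q 1).natAbs with h | h
        · rw [max_eq_right h, max_eq_right (Nat.mul_le_mul_left t h)]
        · rw [max_eq_left h, max_eq_left (Nat.mul_le_mul_left t h)]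
      rw [hmm, ← hqnorm, htr]
    have htR : (0:ℝ) < t := by exact_mod_cast htpos
    have hNR : (0:ℝ) < DSN (k+1) := by exact_mod_cast DSN_pos (k+1)
    have htrR : (t:ℝ) * r = DSN (k+1) := by exact_mod_cast htr
    have hstrip : X ∈ DSstrip ((t:ℤ) * q 0) ((t:ℤ) * q 1) ((1/2)^k) := by
      refine ⟨hXmem, ?_⟩
      show |(((t:ℤ) * q 0 : ℤ) : ℝ) * X 0 0 + (((t:ℤ) * q 1 : ℤ) : ℝ) * X 1 0| < (1/2)^k
      have heq : (((t:ℤ) * q 0 : ℤ) : ℝ) * X 0 0 + (((t:ℤ) * q 1 : ℤ) : ℝ) * X 1 0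
          = (t:ℝ) * ((q 0 : ℝ) * X 0 0 + (q 1 : ℝ) * X 1 0) := by push_cast; ring
      rw [heq, abs_mul, abs_of_pos htR]
      have hlt : (t:ℝ) * |(q 0 : ℝ) * X 0 0 + (q 1 : ℝ) * X 1 0| < (t:ℝ) * DSpsi r :=
        mul_lt_mul_of_pos_left h0 htR
      have hfin' : (t:ℝ) * DSpsi r = (1/2)^k := by
        rw [hpsi]
        field_simp
        linear_combination htrR
      linarith
    have hXG : X ∈ DSG k := Set.mem_biUnion hmem hstrip
    exact hK k hkK hXG
  · have hpsi : DSpsi r = (1/2)^r := by rw [DSpsi, dif_neg hb]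
    have hmem : (q 0, q 1) ∈ DSS r := by
      rw [DSS_mem hr1]
      exact hqnorm.symm
    have hstrip : X ∈ DSstrip (q 0) (q 1) ((1/2)^r) := by
      refine ⟨hXmem, ?_⟩
      show |((q 0 : ℤ) : ℝ) * X 0 0 + ((q 1 : ℤ) : ℝ) * X 1 0| < (1/2)^r
      rw [hpsi] at h0
      exact h0
    have hXF : X ∈ DSF r := by
      rw [DSF, if_neg (by omega : ¬ r = 0)]
      exact Set.mem_biUnion hmem hstrip
    exact hR r (by omega) hXF

/-- **Duffin–Schaeffer type counterexample for `m = 2, n = 1`.** There is an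
approximating function `ψ` with `∑ ψ(r) = ∞` but `|W₀(2, 1; ψ)|₂ = 0`; in particular
the divergence part of the Khintchine–Groshev theorem for `W₀` fails for `m = 2, n = 1`
without monotonicity. -/
theorem stmt_8 :
    ∃ ψ : ℕ → ℝ, IsApproxFun ψ ∧ (¬ Summable fun r : ℕ => ψ (r+1)) ∧
      volume (W0 2 1 ψ) = 0 := by
  refine ⟨DSpsi, ⟨DSpsi_pos, DSpsi_tendsto⟩, DSpsi_not_summable, ?_⟩
  refine le_antisymm ?_ zero_le
  calc volume (W0 2 1 DSpsi)
      ≤ volume (limsup DSF atTop ∪ limsup DSG atTop) := measure_mono DSW0_subset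
    _ ≤ volume (limsup DSF atTop) + volume (limsup DSG atTop) := measure_union_le _ _
    _ = 0 := by rw [DSF_limsup, DSG_limsup, add_zero]
end
end

section
/- Let l, k ∈ ℕ with l ≤ k, and let f and g: r ↦ r^{-l} f(r) both be dimension functions. Let B ⊆ [0,1]^k be a Borel set and let V be a (k−l)-dimensional linear subspace of ℝ^k. If there is a subset S of the orthogonal complement V^⊥ with H^l(S) > 0 such that H^g(B ∩ (V + b)) = ∞ for every b ∈ S, then H^f(B) = ∞. -/
open MeasureTheory Filter Set
open scoped ENNReal NNReal

set_option synthInstance.maxHeartbeats 1000000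
set_option maxHeartbeats 2000000
set_option linter.unusedVariables false

noncomputable section

lemma dimfun_nonneg {g : ℝ → ℝ} (hg : IsDimFun g) (hg0 : g 0 = 0) {d : ℝ} (hd : 0 ≤ d) :
    0 ≤ g d := by
  rcases hd.lt_or_eq with h | h
  · exact (hg.1 d h).le
  · rw [← h, hg0]

lemma dimfun_mono {g : ℝ → ℝ} (hg : IsDimFun g) (hg0 : g 0 = 0) {a d : ℝ}
    (ha : 0 ≤ a) (had : a ≤ d) : g a ≤ g d := by
  rcases ha.lt_or_eq with h | h
  · exact hg.2.1 (mem_Ioi.mpr h) (mem_Ioi.mpr (h.trans_le had)) had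
  · rw [← h, hg0]
    exact dimfun_nonneg hg hg0 (h ▸ had)

lemma key_bound {k l : ℕ} (W : Submodule ℝ (EuclideanSpace ℝ (Fin k)))
    (hW : Module.finrank ℝ W = l) :
    ∃ C : ℝ≥0∞, C ≠ ⊤ ∧ ∀ s : Set (EuclideanSpace ℝ (Fin k)), s ⊆ (W : Set _) →
      ∀ d : ℝ, 0 ≤ d → EMetric.diam s ≤ ENNReal.ofReal d →
      μH[(l : ℝ)] s ≤ ENNReal.ofReal (d ^ l) * C := by
  have hmeas : (μH[(l:ℝ)] : Measure W) = μH[(Module.finrank ℝ W : ℝ)] := by rw [hW]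
  have hHaar : (μH[(Module.finrank ℝ W : ℝ)] : Measure W).IsAddHaarMeasure :=
    MeasureTheory.isAddHaarMeasure_hausdorffMeasure
  refine ⟨(μH[(l:ℝ)] : Measure W) (Metric.closedBall (0 : W) 1), ?_, ?_⟩
  · rw [hmeas]
    exact (isCompact_closedBall _ _).measure_lt_top.ne
  · intro s hsW d hd hdiam
    rcases s.eq_empty_or_nonempty with rfl | ⟨x, hx⟩
    · simp
    have himg : (W.subtypeₗᵢ) '' ((W.subtypeₗᵢ) ⁻¹' s) = s := by
      rw [Set.image_preimage_eq_iff]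
      intro y hy
      exact ⟨⟨y, hsW hy⟩, rfl⟩
    have hiso : Isometry (W.subtypeₗᵢ) := W.subtypeₗᵢ.isometry
    have h1 : μH[(l:ℝ)] s = (μH[(l:ℝ)] : Measure W) ((W.subtypeₗᵢ) ⁻¹' s) := by
      conv_lhs => rw [← himg]
      rw [hiso.hausdorffMeasure_image (Or.inl (by positivity))]
    rw [h1]
    have hxW : x ∈ W := hsW hx
    have hsub : (W.subtypeₗᵢ) ⁻¹' s ⊆ Metric.closedBall (⟨x, hxW⟩ : W) d := by
      intro y hy
      have hyd : dist (y : EuclideanSpace ℝ (Fin k)) x ≤ d := by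
        have hys : (W.subtypeₗᵢ y) ∈ s := hy
        have h2 := (EMetric.edist_le_diam_of_mem hys hx).trans hdiam
        rw [edist_dist] at h2
        exact (ENNReal.ofReal_le_ofReal_iff hd).mp h2
      simpa [Metric.mem_closedBall, Subtype.dist_eq] using hyd
    calc (μH[(l:ℝ)] : Measure W) ((W.subtypeₗᵢ) ⁻¹' s)
        ≤ (μH[(l:ℝ)] : Measure W) (Metric.closedBall (⟨x, hxW⟩ : W) d) := measure_mono hsub
      _ = ENNReal.ofReal (d ^ Module.finrank ℝ W) * (μH[(l:ℝ)] : Measure W) (Metric.closedBall 0 1) := by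
          rw [hmeas]; exact Measure.addHaar_closedBall' _ _ hd
      _ = ENNReal.ofReal (d ^ l) * (μH[(l:ℝ)] : Measure W) (Metric.closedBall 0 1) := by rw [hW]

section proj
variable {k : ℕ} (V : Submodule ℝ (EuclideanSpace ℝ (Fin k)))

noncomputable def projE : EuclideanSpace ℝ (Fin k) → EuclideanSpace ℝ (Fin k) :=
  fun x => ((Vᗮ).subtypeL.comp ((Vᗮ).orthogonalProjectionOnto)) x

lemma projE_lipschitz : LipschitzWith 1 (projE V) := by
  have h : ∀ x, ‖((Vᗮ).subtypeL.comp ((Vᗮ).orthogonalProjectionOnto)) x‖ ≤ 1 * ‖x‖ := by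
    intro x
    calc ‖((Vᗮ).subtypeL.comp ((Vᗮ).orthogonalProjectionOnto)) x‖
        ≤ ‖(Vᗮ).subtypeL.comp ((Vᗮ).orthogonalProjectionOnto)‖ * ‖x‖ :=
          ContinuousLinearMap.le_opNorm _ x
      _ ≤ 1 * ‖x‖ := by
          have hn : ‖(Vᗮ).subtypeL.comp ((Vᗮ).orthogonalProjectionOnto)‖ ≤ 1 := by
            calc ‖(Vᗮ).subtypeL.comp ((Vᗮ).orthogonalProjectionOnto)‖
                ≤ ‖(Vᗮ).subtypeL‖ * ‖(Vᗮ).orthogonalProjectionOnto‖ :=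
                  ContinuousLinearMap.opNorm_comp_le _ _
              _ ≤ 1 * 1 :=
                  mul_le_mul (Submodule.norm_subtypeL_le _) (Submodule.orthogonalProjectionOnto_norm_le _)
                    (norm_nonneg ((Vᗮ).orthogonalProjectionOnto)) zero_le_one
              _ = 1 := one_mul 1
          exact mul_le_mul_of_nonneg_right hn (norm_nonneg x)
  refine LipschitzWith.of_dist_le_mul fun x y => ?_
  have hsub : projE V x - projE V y = ((Vᗮ).subtypeL.comp ((Vᗮ).orthogonalProjectionOnto)) (x - y) :=
    (map_sub ((Vᗮ).subtypeL.comp ((Vᗮ).orthogonalProjectionOnto)) x y).symm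
  rw [dist_eq_norm, dist_eq_norm, hsub]
  simpa using h (x - y)

lemma projE_mem (x : EuclideanSpace ℝ (Fin k)) : projE V x ∈ Vᗮ := ((Vᗮ).orthogonalProjectionOnto x).2

lemma projE_of_memV {v : EuclideanSpace ℝ (Fin k)} (hv : v ∈ V) : projE V v = 0 := by
  have h : (Vᗮ).orthogonalProjectionOnto v = 0 :=
    Submodule.orthogonalProjectionOnto_apply_of_mem_orthogonal
      (Submodule.le_orthogonal_orthogonal V hv)
  simp [projE, h]

lemma projE_of_memVperp {b : EuclideanSpace ℝ (Fin k)} (hb : b ∈ Vᗮ) : projE V b = b := by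
  have h : (((Vᗮ).orthogonalProjectionOnto b : Vᗮ) : EuclideanSpace ℝ (Fin k)) = b :=
    (Submodule.starProjection_apply _ _).symm.trans (Submodule.starProjection_eq_self_iff.mpr hb)
  simpa [projE] using h

lemma projE_slice {b x : EuclideanSpace ℝ (Fin k)} (hb : b ∈ Vᗮ)
    (hx : x ∈ (fun v => v + b) '' (V : Set (EuclideanSpace ℝ (Fin k)))) : projE V x = b := by
  obtain ⟨v, hv, rfl⟩ := hx
  have h : projE V (v + b) = projE V v + projE V b :=
    map_add ((Vᗮ).subtypeL.comp ((Vᗮ).orthogonalProjectionOnto)) v b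
  rw [h, projE_of_memV V hv, projE_of_memVperp V hb, zero_add]

end proj


/-- **The slicing lemma.** Let `l ≤ k`, let `f` and `g : r ↦ r^{-l} f(r)` be dimension
functions, `B ⊆ [0,1]^k` a Borel set, and `V` a `(k-l)`-dimensional subspace of `ℝ^k`.
If `H^g(B ∩ (V + b)) = ∞` for every `b` in a subset `S ⊆ V^⊥` of positive `H^l`-measure,
then `H^f(B) = ∞`. -/
theorem stmt_10 (k l : ℕ) (hlk : l ≤ k)
    (f : ℝ → ℝ) (hf : IsDimFun f) (hg : IsDimFun fun r => f r / r ^ l)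
    (B : Set (EuclideanSpace ℝ (Fin k))) (hBmeas : MeasurableSet B)
    (hBcube : B ⊆ {x | ∀ i, x i ∈ Icc (0:ℝ) 1})
    (V : Submodule ℝ (EuclideanSpace ℝ (Fin k))) (hV : Module.finrank ℝ V = k - l)
    (S : Set (EuclideanSpace ℝ (Fin k))) (hSsub : S ⊆ (Vᗮ : Set (EuclideanSpace ℝ (Fin k))))
    (hSpos : 0 < μH[(l : ℝ)] S)
    (hslices : ∀ b ∈ S,
      hausdorffF (fun r => f r / r ^ l) (EuclideanSpace ℝ (Fin k))
        (B ∩ ((fun v => v + b) '' (V : Set (EuclideanSpace ℝ (Fin k))))) = ⊤) :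
    hausdorffF f (EuclideanSpace ℝ (Fin k)) B = ⊤ := by
  classical
  rcases Nat.eq_zero_or_pos l with rfl | hl
  · -- trivial case l = 0 : V = ⊤ and the slice through 0 is B itself
    have hVtop : V = ⊤ := by
      apply Submodule.eq_top_of_finrank_eq
      rw [hV, finrank_euclideanSpace_fin]
      omega
    obtain ⟨b, hb⟩ : S.Nonempty := nonempty_of_measure_ne_zero hSpos.ne'
    have hb0 : b = (0 : EuclideanSpace ℝ (Fin k)) := by
      have h1 := hSsub hb
      rw [hVtop, Submodule.top_orthogonal_eq_bot] at h1
      simpa using h1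
    have h2 := hslices b hb
    rw [hb0] at h2
    have himg : ((fun v => v + (0 : EuclideanSpace ℝ (Fin k))) ''
        (V : Set (EuclideanSpace ℝ (Fin k)))) = univ := by
      rw [hVtop]; ext x; simp
    rw [himg, inter_univ] at h2
    have hfg : (fun r : ℝ => f r / r ^ 0) = f := by funext r; simp
    rwa [hfg] at h2
  -- main case : l ≥ 1
  by_contra hne
  set g : ℝ → ℝ := fun r => f r / r ^ l with hgdef
  set A := hausdorffF f (EuclideanSpace ℝ (Fin k)) B with hAdef
  have hg0 : g 0 = 0 := by
    show f 0 / (0:ℝ) ^ l = 0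
    rw [zero_pow hl.ne', div_zero]
  have hWrank : Module.finrank ℝ (Vᗮ) = l := by
    have h1 := V.finrank_add_finrank_orthogonal
    rw [hV, finrank_euclideanSpace_fin] at h1
    omega
  obtain ⟨C, hCne, hCb⟩ := key_bound (Vᗮ) hWrank
  -- the sup-inf formula for A
  have hsup : A = ⨆ (r : ℝ≥0∞) (_ : 0 < r),
      ⨅ (t : ℕ → Set (EuclideanSpace ℝ (Fin k))) (_ : B ⊆ iUnion t) (_ : ∀ n, EMetric.diam (t n) ≤ r),
        ∑' n, ⨆ _ : (t n).Nonempty,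
          (fun d : ℝ≥0∞ => ENNReal.ofReal (f d.toReal)) (EMetric.diam (t n)) :=
    hAdef.trans (Measure.mkMetric_apply _ _)
  -- existence of efficient covers of any mesh
  have hAlt : ∀ r : ℝ≥0∞, 0 < r → r ≠ ⊤ →
      ∃ t : ℕ → Set (EuclideanSpace ℝ (Fin k)), B ⊆ ⋃ n, t n ∧ (∀ n, IsCompact (t n)) ∧
        (∀ n, EMetric.diam (t n) ≤ r) ∧ (∀ n, EMetric.diam (t n) ≠ ⊤) ∧
        ∑' n, ⨆ _ : (t n).Nonempty, ENNReal.ofReal (f (EMetric.diam (t n)).toReal) ≤ A + 1 := by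
    intro r hr hrtop
    have h2 : (⨅ (t : ℕ → Set (EuclideanSpace ℝ (Fin k))) (_ : B ⊆ iUnion t) (_ : ∀ n, EMetric.diam (t n) ≤ r),
        ∑' n, ⨆ _ : (t n).Nonempty,
          (fun d : ℝ≥0∞ => ENNReal.ofReal (f d.toReal)) (EMetric.diam (t n))) < A + 1 := by
      refine lt_of_le_of_lt ?_ (ENNReal.lt_add_right hne one_ne_zero)
      conv_rhs => rw [hsup]
      exact le_iSup₂_of_le r hr le_rfl
    rw [iInf_lt_iff] at h2
    obtain ⟨t, h2⟩ := h2
    rw [iInf_lt_iff] at h2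
    obtain ⟨hcov, h2⟩ := h2
    rw [iInf_lt_iff] at h2
    obtain ⟨hmesh, hsum⟩ := h2
    refine ⟨fun n => closure (t n), ?_, ?_, ?_, ?_, ?_⟩
    · exact hcov.trans (iUnion_mono fun n => subset_closure)
    · intro n
      exact (Metric.isBounded_iff_ediam_ne_top.mpr
        ((hmesh n).trans_lt hrtop.lt_top).ne).isCompact_closure
    · intro n; show Metric.ediam (closure (t n)) ≤ r; rw [Metric.ediam_closure]; exact hmesh n
    · intro n; show Metric.ediam (closure (t n)) ≠ ⊤; rw [Metric.ediam_closure]; exact ((hmesh n).trans_lt hrtop.lt_top).ne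
    · simpa only [EMetric.diam, Metric.ediam_closure, closure_nonempty_iff] using hsum.le
  have hXne : C * (A + 1) ≠ ⊤ :=
    ENNReal.mul_ne_top hCne (ENNReal.add_ne_top.mpr ⟨hne, ENNReal.one_ne_top⟩)
  -- the key estimate
  have hkey : ∀ M : ℝ≥0∞, M ≠ 0 → M ≠ ⊤ → μH[(l : ℝ)] S ≤ C * (A + 1) / M := by
    intro M hM0 hMtop
    have hδpos : ∀ m : ℕ, (0 : ℝ≥0∞) < ((m : ℝ≥0∞) + 1)⁻¹ := fun m =>
      ENNReal.inv_pos.mpr (ENNReal.add_ne_top.mpr ⟨ENNReal.natCast_ne_top m, ENNReal.one_ne_top⟩)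
    have hδtop : ∀ m : ℕ, ((m : ℝ≥0∞) + 1)⁻¹ ≠ ⊤ := fun m =>
      ENNReal.inv_ne_top.mpr (by simp)
    choose t hcov hcpt hmesh hdne hsum using fun m : ℕ =>
      hAlt (((m : ℝ≥0∞) + 1)⁻¹) (hδpos m) (hδtop m)
    set P : ℕ → ℕ → Set (EuclideanSpace ℝ (Fin k)) := fun m n => projE V '' t m n with hP
    have hPmeas : ∀ m n, MeasurableSet (P m n) := fun m n =>
      ((hcpt m n).image (projE_lipschitz V).continuous).measurableSet
    have hPsub : ∀ m n, P m n ⊆ (Vᗮ : Set (EuclideanSpace ℝ (Fin k))) := by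
      rintro m n _ ⟨x, hx, rfl⟩; exact projE_mem V x
    set c : ℕ → ℕ → ℝ≥0∞ := fun m n => ENNReal.ofReal (g (EMetric.diam (t m n)).toReal) with hc
    set σ : ℕ → EuclideanSpace ℝ (Fin k) → ℝ≥0∞ := fun m b => ∑' n, (P m n).indicator (fun _ => c m n) b with hσ
    have hσmeas : ∀ m, Measurable (σ m) := fun m =>
      Measurable.ennreal_tsum fun n => measurable_const.indicator (hPmeas m n)
    -- integral bound
    have hint : ∀ m, (∫⁻ b, σ m b ∂(μH[(l : ℝ)])) ≤ C * (A + 1) := by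
      intro m
      rw [hσ]
      rw [lintegral_tsum fun n => (measurable_const.indicator (hPmeas m n)).aemeasurable]
      have hterm : ∀ n, (∫⁻ b, (P m n).indicator (fun _ => c m n) b ∂(μH[(l : ℝ)]))
          ≤ C * ⨆ _ : (t m n).Nonempty, ENNReal.ofReal (f (EMetric.diam (t m n)).toReal) := by
        intro n
        rw [lintegral_indicator_const (hPmeas m n)]
        rcases (t m n).eq_empty_or_nonempty with he | hne2
        · simp [hP, he]
        · rw [iSup_pos hne2]
          set d : ℝ := (EMetric.diam (t m n)).toReal with hd
          have hd0 : (0:ℝ) ≤ d := ENNReal.toReal_nonneg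
          have hPd : EMetric.diam (P m n) ≤ ENNReal.ofReal d := by
            refine le_trans ((projE_lipschitz V).ediam_image_le _) ?_
            rw [ENNReal.coe_one, one_mul, hd, ENNReal.ofReal_toReal (hdne m n)]
            exact le_rfl
          have hμP := hCb (P m n) (hPsub m n) d hd0 hPd
          have hgd0 : (0:ℝ) ≤ g d := dimfun_nonneg hg hg0 hd0
          calc c m n * μH[(l : ℝ)] (P m n)
              ≤ ENNReal.ofReal (g d) * (ENNReal.ofReal (d ^ l) * C) := by
                exact mul_le_mul_right hμP _
            _ = ENNReal.ofReal (g d) * ENNReal.ofReal (d ^ l) * C := by rw [mul_assoc]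
            _ ≤ ENNReal.ofReal (f d) * C := by
                refine mul_le_mul_left ?_ C
                rw [← ENNReal.ofReal_mul hgd0]
                rcases hd0.lt_or_eq with h0 | h0
                · have hcg : g d * d ^ l = f d := by
                    show f d / d ^ l * d ^ l = f d
                    exact div_mul_cancel₀ _ (by positivity)
                  rw [hcg]
                · rw [← h0]
                  simp [zero_pow hl.ne', hg0]
            _ = C * ENNReal.ofReal (f d) := mul_comm _ _
      calc ∑' n, ∫⁻ b, (P m n).indicator (fun _ => c m n) b ∂(μH[(l : ℝ)])
          ≤ ∑' n, C * ⨆ _ : (t m n).Nonempty,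
              ENNReal.ofReal (f (EMetric.diam (t m n)).toReal) := ENNReal.tsum_le_tsum hterm
        _ = C * ∑' n, ⨆ _ : (t m n).Nonempty,
              ENNReal.ofReal (f (EMetric.diam (t m n)).toReal) := ENNReal.tsum_mul_left
        _ ≤ C * (A + 1) := mul_le_mul_right (hsum m) C
    have hmark : ∀ m, μH[(l : ℝ)] {b | M ≤ σ m b} ≤ C * (A + 1) / M := fun m =>
      le_trans (meas_ge_le_lintegral_div (hσmeas m).aemeasurable hM0 hMtop)
        (ENNReal.div_le_div_right (hint m) M)
    -- S is contained in the union of the tail intersections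
    set G : ℕ → Set (EuclideanSpace ℝ (Fin k)) := fun n => ⋂ j, {b | M ≤ σ (n + j) b} with hG
    have hGmono : Monotone G := by
      intro n₁ n₂ hn x hx
      simp only [hG, mem_iInter, mem_setOf_eq] at hx ⊢
      intro j
      have h := hx (n₂ - n₁ + j)
      rwa [show n₁ + (n₂ - n₁ + j) = n₂ + j by omega] at h
    have hSsubU : S ⊆ ⋃ n, G n := by
      intro b hb
      have hbW : b ∈ Vᗮ := hSsub hb
      have hsl := hslices b hb
      rw [hausdorffF, Measure.mkMetric_apply] at hsl
      have hlt : M < ⊤ := hMtop.lt_top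
      rw [← hsl, lt_iSup_iff] at hlt
      obtain ⟨r, hlt⟩ := hlt
      rw [lt_iSup_iff] at hlt
      obtain ⟨hr, hlt⟩ := hlt
      obtain ⟨n₀, hn₀⟩ := ENNReal.exists_inv_nat_lt hr.ne'
      refine mem_iUnion.mpr ⟨n₀, ?_⟩
      simp only [hG, mem_iInter, mem_setOf_eq]
      intro j
      set m := n₀ + j with hm
      set Sl : Set (EuclideanSpace ℝ (Fin k)) := B ∩ ((fun v => v + b) '' (V : Set (EuclideanSpace ℝ (Fin k)))) with hSl
      refine le_of_lt (hlt.trans_le ?_)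
      have hucov : Sl ⊆ iUnion (fun i => t m i ∩ Sl) := by
        intro x hx
        obtain ⟨i, hi⟩ := mem_iUnion.mp (hcov m hx.1)
        exact mem_iUnion.mpr ⟨i, hi, hx⟩
      have humesh : ∀ i, EMetric.diam (t m i ∩ Sl) ≤ r := by
        intro i
        refine le_trans (EMetric.diam_mono inter_subset_left) ?_
        refine le_trans (hmesh m i) (le_trans ?_ hn₀.le)
        apply ENNReal.inv_le_inv.mpr
        calc (n₀ : ℝ≥0∞) ≤ (m : ℝ≥0∞) := Nat.cast_le.mpr (by omega)
          _ ≤ (m : ℝ≥0∞) + 1 := le_self_add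
      refine le_trans (iInf_le_of_le (fun i => t m i ∩ Sl)
        (iInf_le_of_le hucov (iInf_le _ humesh))) ?_
      simp only [hσ]
      refine ENNReal.tsum_le_tsum fun i => ?_
      refine iSup_le fun hne2 => ?_
      obtain ⟨x, hx1, hx2⟩ := hne2
      have hbP : b ∈ P m i := ⟨x, hx1, projE_slice V hbW hx2.2⟩
      rw [Set.indicator_of_mem hbP]
      simp only [hc]
      refine ENNReal.ofReal_le_ofReal ?_
      refine dimfun_mono hg hg0 ENNReal.toReal_nonneg ?_
      exact ENNReal.toReal_mono (hdne m i) (EMetric.diam_mono inter_subset_left)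
    calc μH[(l : ℝ)] S ≤ μH[(l : ℝ)] (⋃ n, G n) := measure_mono hSsubU
      _ = ⨆ n, μH[(l : ℝ)] (G n) := hGmono.measure_iUnion
      _ ≤ C * (A + 1) / M := by
          refine iSup_le fun n => ?_
          refine le_trans (measure_mono fun x hx => ?_) (hmark n)
          simpa using (mem_iInter.mp hx 0)
  -- conclude : μH[l] S = 0, contradiction
  rcases eq_top_or_lt_top (μH[(l : ℝ)] S) with htop | hltS
  · have h := hkey 1 one_ne_zero ENNReal.one_ne_top
    rw [htop, div_one] at h
    exact hXne (top_le_iff.mp h)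
  · have hμne : μH[(l : ℝ)] S ≠ ⊤ := hltS.ne
    have hμ0 : μH[(l : ℝ)] S ≠ 0 := hSpos.ne'
    obtain ⟨n, hn⟩ : ∃ n : ℕ, C * (A + 1) / μH[(l : ℝ)] S < n :=
      ENNReal.exists_nat_gt (ENNReal.div_lt_top hXne hμ0).ne
    have hn0 : (n : ℝ≥0∞) ≠ 0 := by
      rintro h
      rw [h] at hn
      exact (not_lt_of_ge zero_le) hn
    have hkn := hkey n hn0 (ENNReal.natCast_ne_top n)
    have h2 : C * (A + 1) < (n : ℝ≥0∞) * μH[(l : ℝ)] S := by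
      rwa [ENNReal.div_lt_iff (Or.inl hμ0) (Or.inl hμne)] at hn
    have h3 : (n : ℝ≥0∞) * μH[(l : ℝ)] S ≤ C * (A + 1) := by
      rw [mul_comm]
      rwa [← ENNReal.le_div_iff_mul_le (Or.inl hn0) (Or.inl (ENNReal.natCast_ne_top n))]
    exact absurd (h2.trans_le h3) (lt_irrefl _)
end
end
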